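/- If H and the easy cycle E are both Clifford gates and the twirling set is the full Pauli group P_n, then the effective dressed-cycle error channel E = ⟨φ(E^{-1})φ(Q^{-1})φ(H^{-1})ν(H)ν(QER)φ(R^{-1})⟩_{Q,R ∈ P_n} equals the Pauli twirl [φ(E^{-1})φ(H^{-1})ν(H)⟨ν(ER')φ(R'^{-1})⟩_{R'∈P_n}]^{P_n}, and is therefore a Pauli stochastic channel Σ_P p(P) PρP†. -/

import Mathlib

open Matrix Finset

/-- n-qubit Paulis (mod phase), identified with `(Z₂)^{2n}` via `P = Xᵃ Zᵇ`. -/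
abbrev Pauli (n : ℕ) := (Fin n → ZMod 2) × (Fin n → ZMod 2)

/-- The standard symplectic form on `(Z₂)^{2n}`. -/
def symp {n : ℕ} (Q P : Pauli n) : ZMod 2 :=
  ∑ i, (Q.1 i * P.2 i + Q.2 i * P.1 i)

/-- The commutation character: `χ_Q(P) = 1` if `Q` and `P` commute, `-1` otherwise. -/
def chi {n : ℕ} (Q P : Pauli n) : ℤ := (-1) ^ (symp Q P).val

/-- The Pauli operator `Xᵃ Zᵇ` as a `2ⁿ × 2ⁿ` matrix (indexed by bit strings). -/
def PauliOp {n : ℕ} (P : Pauli n) :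
    Matrix (Fin n → ZMod 2) (Fin n → ZMod 2) ℂ :=
  fun s t => if s = t + P.1 then (-1 : ℂ) ^ (∑ i, P.2 i * t i).val else 0

/-!
Because `E` is Clifford, conjugating the twirling Pauli `Q` through `E` only relabels it as
`eAct Q`: the phase `c` cancels between `Q` and `Q†`. After the bijective substitutions
`P = eAct Q` and `R = P + R'`, the double average over `(Q, R)` is therefore the Pauli twirl of the
map averaged over the dressings `R'`. That map is CPTP, and writing each Kraus operator in the Pauli
basis, `K = Σ c(Q) Q`, the twirl removes every cross term `Q ρ Q'†` with `Q ≠ Q'`, by orthogonality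
of the characters `P ↦ (-1)^⟨P, Q⟩` of the symplectic form. What remains is
`Σ_Q (Σ_k |c_k(Q)|²) Q ρ Q†`, and trace preservation (Parseval for the Pauli basis) makes the
weights sum to one.
-/

local notation "𝕄[" n "]" => Matrix (Fin n → ZMod 2) (Fin n → ZMod 2) ℂ

lemma conj_conj_eq_of_mul_eq_smul_mul {m : Type*} [Fintype m] [DecidableEq m] [Nonempty m]
    {E U V : Matrix m m ℂ} {c : ℂ} (hE : Eᴴ * E = 1) (hU : Uᴴ * U = 1) (hV : Vᴴ * V = 1)
    (h : U * E = c • (E * V)) (M : Matrix m m ℂ) :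
    Eᴴ * (Uᴴ * M * U) * E = Vᴴ * (Eᴴ * M * E) * V := by
  have hsandwich : ∀ X, (U * E)ᴴ * X * (U * E) = (star c * c) • ((E * V)ᴴ * X * (E * V)) := by
    intro X
    simp only [h, conjTranspose_smul, smul_mul_assoc, mul_smul_comm, smul_smul, mul_comm c]
  have hUE : (U * E)ᴴ * (U * E) = 1 := by
    rw [conjTranspose_mul, Matrix.mul_assoc, ← Matrix.mul_assoc Uᴴ, hU, Matrix.one_mul, hE]
  have hEV : (E * V)ᴴ * (E * V) = 1 := by
    rw [conjTranspose_mul, Matrix.mul_assoc, ← Matrix.mul_assoc Eᴴ, hE, Matrix.one_mul, hV]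
  have hc : star c * c = 1 := by
    have h1 := hsandwich 1
    rw [Matrix.mul_one, Matrix.mul_one, hUE, hEV] at h1
    exact smul_left_injective ℂ one_ne_zero (h1.symm.trans (one_smul ℂ 1).symm)
  have := hsandwich M
  rw [hc, one_smul] at this
  simpa only [conjTranspose_mul, Matrix.mul_assoc] using this

section Pauli

variable {n : ℕ}

noncomputable def signChar : AddChar (ZMod 2) ℂ :=
  AddChar.zmodChar 2 (by norm_num : (-1 : ℂ) ^ 2 = 1)

lemma signChar_one : signChar 1 = -1 := by
  simp [signChar, AddChar.zmodChar_apply, ZMod.val_one]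

lemma signChar_mul_self (x : ZMod 2) : signChar x * signChar x = 1 := by
  rw [← AddChar.map_add_eq_mul, ZModModule.add_self, AddChar.map_zero_eq_one]

lemma star_signChar (x : ZMod 2) : star (signChar x) = signChar x := by
  obtain rfl | rfl : x = 0 ∨ x = 1 := by revert x; decide
  · simp
  · simp [signChar_one]

lemma PauliOp_apply (P : Pauli n) (s t : Fin n → ZMod 2) :
    PauliOp P s t = if s = t + P.1 then signChar (P.2 ⬝ᵥ t) else 0 := rfl

lemma PauliOp_zero : PauliOp (0 : Pauli n) = 1 := by
  ext s t
  simp [PauliOp_apply, Matrix.one_apply]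

lemma PauliOp_mul (P Q : Pauli n) :
    PauliOp P * PauliOp Q = signChar (P.2 ⬝ᵥ Q.1) • PauliOp (P + Q) := by
  ext s t
  rw [Matrix.mul_apply, sum_eq_single (t + Q.1) (fun u _ hu => by
    rw [PauliOp_apply Q, if_neg hu, mul_zero]) (by simp)]
  simp only [PauliOp_apply, Matrix.smul_apply, smul_eq_mul, Prod.fst_add, Prod.snd_add,
    add_assoc, add_comm Q.1, dotProduct_add, add_dotProduct, AddChar.map_add_eq_mul]
  split_ifs <;> ring

lemma PauliOp_conjTranspose (P : Pauli n) :
    (PauliOp P)ᴴ = signChar (P.2 ⬝ᵥ P.1) • PauliOp P := by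
  ext s t
  simp only [Matrix.conjTranspose_apply, PauliOp_apply, Matrix.smul_apply, smul_eq_mul]
  by_cases h : s = t + P.1
  · rw [if_pos (by rw [h, add_assoc, ZModModule.add_self, add_zero]), if_pos h, star_signChar,
      h, dotProduct_add, AddChar.map_add_eq_mul, mul_comm]
  · rw [if_neg (fun h' => h (by rw [h', add_assoc, ZModModule.add_self, add_zero])), if_neg h,
      star_zero, mul_zero]

lemma PauliOp_conjTranspose_mul_self (P : Pauli n) : (PauliOp P)ᴴ * PauliOp P = 1 := by
  rw [PauliOp_conjTranspose, smul_mul_assoc, PauliOp_mul, ZModModule.add_self, PauliOp_zero,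
    smul_smul, signChar_mul_self, one_smul]

lemma PauliOp_mul_conjTranspose_self (P : Pauli n) : PauliOp P * (PauliOp P)ᴴ = 1 := by
  rw [PauliOp_conjTranspose, mul_smul_comm, PauliOp_mul, ZModModule.add_self, PauliOp_zero,
    smul_smul, signChar_mul_self, one_smul]

lemma PauliOp_mul_mul_conjTranspose (P : Pauli n) (ρ : 𝕄[n]) :
    PauliOp P * ρ * (PauliOp P)ᴴ = (PauliOp P)ᴴ * ρ * PauliOp P := by
  rw [PauliOp_conjTranspose, smul_mul_assoc, smul_mul_assoc, mul_smul_comm]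

lemma symp_eq_dotProduct (P Q : Pauli n) : symp P Q = P.1 ⬝ᵥ Q.2 + P.2 ⬝ᵥ Q.1 := by
  simp only [symp, dotProduct, sum_add_distrib]

lemma symp_add_left (P P' Q : Pauli n) : symp (P + P') Q = symp P Q + symp P' Q := by
  simp only [symp_eq_dotProduct, Prod.fst_add, Prod.snd_add, add_dotProduct]
  abel

lemma symp_add_right (P Q Q' : Pauli n) : symp P (Q + Q') = symp P Q + symp P Q' := by
  simp only [symp_eq_dotProduct, Prod.fst_add, Prod.snd_add, dotProduct_add]
  abel

lemma conjTranspose_PauliOp_mul_mul (P Q : Pauli n) :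
    (PauliOp P)ᴴ * PauliOp Q * PauliOp P = signChar (symp P Q) • PauliOp Q := by
  rw [PauliOp_conjTranspose, smul_mul_assoc, smul_mul_assoc, PauliOp_mul, smul_mul_assoc,
    PauliOp_mul, add_comm P Q, add_assoc, ZModModule.add_self, add_zero, smul_smul, smul_smul,
    symp_eq_dotProduct, Prod.snd_add, add_dotProduct, dotProduct_comm Q.2]
  simp only [AddChar.map_add_eq_mul]
  congr 1
  linear_combination
    (signChar (P.1 ⬝ᵥ Q.2) * signChar (P.2 ⬝ᵥ Q.1)) * signChar_mul_self (P.2 ⬝ᵥ P.1)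

lemma conjTranspose_PauliOp_add_mul_mul (P R : Pauli n) (ρ : 𝕄[n]) :
    (PauliOp (P + R))ᴴ * ρ * PauliOp (P + R)
      = (PauliOp R)ᴴ * (PauliOp P * ρ * (PauliOp P)ᴴ) * PauliOp R := by
  have h : PauliOp (P + R) = signChar (P.2 ⬝ᵥ R.1) • (PauliOp P * PauliOp R) := by
    rw [PauliOp_mul, smul_smul, signChar_mul_self, one_smul]
  simp only [h, conjTranspose_smul, star_signChar, smul_mul_assoc, mul_smul_comm, smul_smul,
    signChar_mul_self, one_smul, conjTranspose_mul, PauliOp_mul_mul_conjTranspose]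
  simp only [Matrix.mul_assoc]

lemma exists_symp_eq_one {Q : Pauli n} (hQ : Q ≠ 0) : ∃ P : Pauli n, symp P Q = 1 := by
  have h01 : ∀ x : ZMod 2, x ≠ 0 → x = 1 := by decide
  by_cases h1 : Q.1 = 0
  · obtain ⟨j, hj⟩ := Function.ne_iff.1 (fun h2 : Q.2 = 0 => hQ (Prod.ext h1 h2))
    exact ⟨(Pi.single j 1, 0), by simp [symp_eq_dotProduct, h01 _ hj]⟩
  · obtain ⟨j, hj⟩ := Function.ne_iff.1 h1
    exact ⟨(0, Pi.single j 1), by simp [symp_eq_dotProduct, h01 _ hj]⟩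

lemma card_Pauli (n : ℕ) : (Fintype.card (Pauli n) : ℂ) = 4 ^ n := by
  simp [Fintype.card_prod, ← mul_pow]

lemma sum_signChar_symp (Q : Pauli n) :
    ∑ P : Pauli n, signChar (symp P Q) = if Q = 0 then 4 ^ n else 0 := by
  split_ifs with hQ
  · simp [hQ, symp, ← card_Pauli]
  · obtain ⟨P, hP⟩ := exists_symp_eq_one hQ
    let ψ := signChar.compAddMonoidHom (AddMonoidHom.mk' (symp · Q) (symp_add_left · · Q))
    refine AddChar.sum_eq_zero_iff_ne_zero (ψ := ψ) |>.2 <| AddChar.ne_zero_iff.2 ⟨P, ?_⟩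
    change signChar (symp P Q) ≠ 1
    rw [hP, signChar_one]
    norm_num

lemma sum_signChar_symp_mul (Q Q' : Pauli n) :
    ∑ P : Pauli n, signChar (symp P Q) * signChar (symp P Q') = if Q = Q' then 4 ^ n else 0 := by
  simp only [← AddChar.map_add_eq_mul, ← symp_add_right, sum_signChar_symp, add_eq_zero_iff_eq_neg,
    ZModModule.neg_eq_self]

lemma trace_PauliOp (R : Pauli n) : trace (PauliOp R) = if R = 0 then 2 ^ n else 0 := by
  split_ifs with hR
  · simp [hR, PauliOp_zero]
  · obtain ⟨P, hP⟩ := exists_symp_eq_one hR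
    have h := congrArg trace (conjTranspose_PauliOp_mul_mul P R)
    rw [Matrix.trace_mul_comm, ← Matrix.mul_assoc, PauliOp_mul_conjTranspose_self, Matrix.one_mul,
      hP, signChar_one, trace_smul, neg_smul, one_smul] at h
    exact CharZero.eq_neg_self_iff.1 h

lemma trace_conjTranspose_PauliOp_mul (Q Q' : Pauli n) :
    trace ((PauliOp Q)ᴴ * PauliOp Q') = if Q = Q' then 2 ^ n else 0 := by
  split_ifs with h
  · simp [h, PauliOp_conjTranspose_mul_self]
  · rw [PauliOp_conjTranspose, smul_mul_assoc, PauliOp_mul, trace_smul, trace_smul, trace_PauliOp,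
      if_neg (by rwa [add_eq_zero_iff_eq_neg, ZModModule.neg_eq_self]), smul_zero, smul_zero]

lemma linearIndependent_PauliOp (n : ℕ) : LinearIndependent ℂ (PauliOp (n := n)) := by
  refine Fintype.linearIndependent_iff.2 fun c hc Q => ?_
  have h := congrArg (fun A => trace ((PauliOp Q)ᴴ * A)) hc
  simp only [mul_sum, mul_smul_comm, trace_sum, trace_smul, trace_conjTranspose_PauliOp_mul,
    smul_eq_mul, mul_ite, mul_zero, sum_ite_eq, mem_univ, if_true, trace_zero] at h
  exact (mul_eq_zero.1 h).resolve_right (pow_ne_zero _ two_ne_zero)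

lemma exists_eq_sum_smul_PauliOp (A : 𝕄[n]) :
    ∃ c : Pauli n → ℂ, A = ∑ Q, c Q • PauliOp Q := by
  have hspan := (linearIndependent_PauliOp n).span_eq_top_of_card_eq_finrank (by
    simp [Module.finrank_matrix, Fintype.card_prod])
  obtain ⟨c, hc⟩ := (Submodule.mem_span_range_iff_exists_fun ℂ).1 (hspan ▸ Submodule.mem_top)
  exact ⟨c, hc.symm⟩

noncomputable def pauliTwirl (Φ : 𝕄[n] → 𝕄[n]) (ρ : 𝕄[n]) : 𝕄[n] :=
  ((4 : ℂ) ^ n)⁻¹ • ∑ P : Pauli n, (PauliOp P)ᴴ * Φ (PauliOp P * ρ * (PauliOp P)ᴴ) * PauliOp P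

lemma pauliTwirl_sum {ι : Type*} (s : Finset ι) (Φ : ι → 𝕄[n] → 𝕄[n]) (ρ : 𝕄[n]) :
    pauliTwirl (fun X => ∑ i ∈ s, Φ i X) ρ = ∑ i ∈ s, pauliTwirl (Φ i) ρ := by
  simp only [pauliTwirl, mul_sum, sum_mul, ← smul_sum]
  rw [sum_comm]

lemma pauliTwirl_smul (a : ℂ) (Φ : 𝕄[n] → 𝕄[n]) (ρ : 𝕄[n]) :
    pauliTwirl (fun X => a • Φ X) ρ = a • pauliTwirl Φ ρ := by
  simp only [pauliTwirl, mul_smul_comm, smul_mul_assoc, smul_sum, smul_comm a]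

lemma pauliTwirl_PauliOp_mul_mul (Q Q' : Pauli n) (ρ : 𝕄[n]) :
    pauliTwirl (fun X => PauliOp Q * X * (PauliOp Q')ᴴ) ρ
      = if Q = Q' then PauliOp Q * ρ * (PauliOp Q)ᴴ else 0 := by
  have hterm : ∀ P : Pauli n,
      (PauliOp P)ᴴ * (PauliOp Q * (PauliOp P * ρ * (PauliOp P)ᴴ) * (PauliOp Q')ᴴ) * PauliOp P
        = (signChar (symp P Q) * signChar (symp P Q')) • (PauliOp Q * ρ * (PauliOp Q')ᴴ) := by
    intro P
    calc _ = ((PauliOp P)ᴴ * PauliOp Q * PauliOp P) * ρ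
            * ((PauliOp P)ᴴ * PauliOp Q' * PauliOp P)ᴴ := by
          simp only [conjTranspose_mul, conjTranspose_conjTranspose, Matrix.mul_assoc]
      _ = _ := by
          simp only [conjTranspose_PauliOp_mul_mul, conjTranspose_smul, star_signChar,
            smul_mul_assoc, mul_smul_comm, smul_smul, mul_comm (signChar (symp P Q'))]
  simp only [pauliTwirl, hterm, ← sum_smul, sum_signChar_symp_mul, smul_smul]
  split_ifs with h
  · rw [h, inv_mul_cancel₀ (by norm_num : (4 : ℂ) ^ n ≠ 0), one_smul]
  · rw [mul_zero, zero_smul]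

lemma pauliTwirl_sum_smul_PauliOp_sandwich (c : Pauli n → ℂ) (ρ : 𝕄[n]) :
    pauliTwirl (fun X => (∑ Q, c Q • PauliOp Q) * X * (∑ Q, c Q • PauliOp Q)ᴴ) ρ
      = ∑ Q, (Complex.normSq (c Q) : ℂ) • (PauliOp Q * ρ * (PauliOp Q)ᴴ) := by
  have hexpand : ∀ X, (∑ Q, c Q • PauliOp Q) * X * (∑ Q, c Q • PauliOp Q)ᴴ
      = ∑ Q, ∑ Q', (c Q * star (c Q')) • (PauliOp Q * X * (PauliOp Q')ᴴ) := by
    intro X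
    simp only [conjTranspose_sum, conjTranspose_smul, sum_mul, mul_sum, smul_mul_assoc,
      mul_smul_comm, smul_sum, smul_smul]
    rw [sum_comm]
    simp only [mul_comm (star _)]
  simp only [hexpand, pauliTwirl_sum, pauliTwirl_smul, pauliTwirl_PauliOp_mul_mul, smul_ite,
    smul_zero, sum_ite_eq, mem_univ, if_true, Complex.star_def, Complex.mul_conj]

lemma trace_conjTranspose_mul_self_sum_smul_PauliOp (c : Pauli n → ℂ) :
    trace ((∑ Q, c Q • PauliOp Q)ᴴ * ∑ Q, c Q • PauliOp Q)
      = 2 ^ n * ∑ Q, (Complex.normSq (c Q) : ℂ) := by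
  simp only [conjTranspose_sum, conjTranspose_smul, sum_mul, mul_sum, smul_mul_assoc,
    mul_smul_comm, trace_sum, trace_smul, trace_conjTranspose_PauliOp_mul, smul_eq_mul, mul_ite,
    mul_zero, sum_ite_eq', mem_univ, if_true, Complex.star_def, ← Complex.mul_conj]
  exact sum_congr rfl fun Q _ => by ring

lemma exists_pauliTwirl_kraus_eq {ι : Type*} [Fintype ι] (K : ι → 𝕄[n])
    (hK : ∑ k, (K k)ᴴ * K k = 1) :
    ∃ p : Pauli n → ℝ, (∀ P, 0 ≤ p P) ∧ ∑ P, p P = 1 ∧ ∀ ρ : 𝕄[n],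
      pauliTwirl (fun X => ∑ k, K k * X * (K k)ᴴ) ρ
        = ∑ P, (p P : ℂ) • (PauliOp P * ρ * (PauliOp P)ᴴ) := by
  choose c hc using fun k => exists_eq_sum_smul_PauliOp (K k)
  refine ⟨fun Q => ∑ k, Complex.normSq (c k Q), fun Q => sum_nonneg fun k _ =>
    Complex.normSq_nonneg _, ?_, fun ρ => ?_⟩
  · have htrace : (2 : ℂ) ^ n * 1 = 2 ^ n * ∑ Q, ∑ k, (Complex.normSq (c k Q) : ℂ) := by
      calc (2 : ℂ) ^ n * 1 = trace (∑ k, (K k)ᴴ * K k) := by simp [hK]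
        _ = _ := by
          simp only [trace_sum, hc, trace_conjTranspose_mul_self_sum_smul_PauliOp, ← mul_sum]
          rw [sum_comm]
    exact_mod_cast (mul_left_cancel₀ (pow_ne_zero _ two_ne_zero) htrace).symm
  · simp only [pauliTwirl_sum, hc, pauliTwirl_sum_smul_PauliOp_sandwich, Complex.ofReal_sum,
      sum_smul]
    exact sum_comm

/-- `e` is the symplectic action of conjugation by the easy cycle `E`, and `Λ R` is the noise
`φ(H⁻¹) ν(H) ν(E R)` of the hard cycle preceded by the easy cycle dressed with `R`. -/
noncomputable def effectiveChannel (e : Equiv.Perm (Pauli n)) (E : 𝕄[n])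
    (Λ : Pauli n → 𝕄[n] → 𝕄[n]) (ρ : 𝕄[n]) : 𝕄[n] :=
  ((16 : ℂ) ^ n)⁻¹ • ∑ Q : Pauli n, ∑ R : Pauli n,
    Eᴴ * ((PauliOp Q)ᴴ * Λ (e Q + R) ((PauliOp R)ᴴ * ρ * PauliOp R) * PauliOp Q) * E

lemma effectiveChannel_eq_pauliTwirl (e : Equiv.Perm (Pauli n)) (E : 𝕄[n])
    (Λ : Pauli n → 𝕄[n] → 𝕄[n])
    (hconj : ∀ Q M, Eᴴ * ((PauliOp Q)ᴴ * M * PauliOp Q) * E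
      = (PauliOp (e Q))ᴴ * (Eᴴ * M * E) * PauliOp (e Q)) (ρ : 𝕄[n]) :
    effectiveChannel e E Λ ρ
      = pauliTwirl (fun X => ((4 : ℂ) ^ n)⁻¹ •
          ∑ R' : Pauli n, Eᴴ * Λ R' ((PauliOp R')ᴴ * X * PauliOp R') * E) ρ := by
  let G : Pauli n → Pauli n → 𝕄[n] := fun P R =>
    (PauliOp P)ᴴ * (Eᴴ * Λ (P + R) ((PauliOp R)ᴴ * ρ * PauliOp R) * E) * PauliOp P
  have hreindex : ∑ Q : Pauli n, ∑ R : Pauli n,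
      Eᴴ * ((PauliOp Q)ᴴ * Λ (e Q + R) ((PauliOp R)ᴴ * ρ * PauliOp R) * PauliOp Q) * E
        = ∑ P : Pauli n, ∑ R' : Pauli n, G P (P + R') := by
    calc _ = ∑ Q, ∑ R, G (e Q) R := by simp only [hconj, G]
      _ = ∑ P, ∑ R, G P R := Equiv.sum_comp e (fun P => ∑ R, G P R)
      _ = _ := sum_congr rfl fun P _ => (Equiv.sum_comp (Equiv.addLeft P) (G P)).symm
  have h16 : (16 : ℂ) ^ n = 4 ^ n * 4 ^ n := by rw [← mul_pow]; norm_num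
  rw [effectiveChannel, hreindex, pauliTwirl, h16, mul_inv, mul_smul, smul_sum]
  congr 1
  refine sum_congr rfl fun P _ => ?_
  simp only [G, ← add_assoc, ZModModule.add_self, zero_add, conjTranspose_PauliOp_add_mul_mul,
    mul_smul_comm, smul_mul_assoc, mul_sum, sum_mul]

end Pauli

theorem effective_error_clifford_general {n m : ℕ}
    (E H : Matrix (Fin n → ZMod 2) (Fin n → ZMod 2) ℂ)
    (nuH : Matrix (Fin n → ZMod 2) (Fin n → ZMod 2) ℂ →ₗ[ℂ]
      Matrix (Fin n → ZMod 2) (Fin n → ZMod 2) ℂ)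
    (nuE : Pauli n → (Matrix (Fin n → ZMod 2) (Fin n → ZMod 2) ℂ →ₗ[ℂ]
      Matrix (Fin n → ZMod 2) (Fin n → ZMod 2) ℂ))
    (hE : Eᴴ * E = 1 ∧ E * Eᴴ = 1)
    (eAct : Equiv.Perm (Pauli n))
    (heAct : ∀ Q : Pauli n, ∃ c : ℂ, PauliOp Q * E = c • (E * PauliOp (eAct Q)))
    (K : Fin m → Matrix (Fin n → ZMod 2) (Fin n → ZMod 2) ℂ)
    (hK : ∑ k, (K k)ᴴ * K k = 1)
    (hKraus : ∀ ρ,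
      Eᴴ * (Hᴴ * nuH (((4 : ℂ) ^ n)⁻¹ •
          ∑ R' : Pauli n, nuE R' ((PauliOp R')ᴴ * ρ * PauliOp R')) * H) * E
        = ∑ k, K k * ρ * (K k)ᴴ) :
    -- the effective error channel equals the Pauli twirl of the bracketed map:
    (∀ ρ : Matrix (Fin n → ZMod 2) (Fin n → ZMod 2) ℂ,
      ((16 : ℂ) ^ n)⁻¹ • ∑ Q : Pauli n, ∑ R : Pauli n,
          Eᴴ * ((PauliOp Q)ᴴ * (Hᴴ *
            nuH (nuE (eAct Q + R) ((PauliOp R)ᴴ * ρ * PauliOp R)) * H) * PauliOp Q) * E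
        = ((4 : ℂ) ^ n)⁻¹ • ∑ P : Pauli n,
            (PauliOp P)ᴴ *
              (Eᴴ * (Hᴴ * nuH (((4 : ℂ) ^ n)⁻¹ •
                  ∑ R' : Pauli n, nuE R'
                    ((PauliOp R')ᴴ * (PauliOp P * ρ * (PauliOp P)ᴴ) * PauliOp R')) * H) * E)
              * PauliOp P) ∧
    -- and is therefore a Pauli stochastic channel:
    (∃ p : Pauli n → ℝ, (∀ P, 0 ≤ p P) ∧ (∑ P, p P = 1) ∧
      ∀ ρ : Matrix (Fin n → ZMod 2) (Fin n → ZMod 2) ℂ,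
        ((16 : ℂ) ^ n)⁻¹ • ∑ Q : Pauli n, ∑ R : Pauli n,
            Eᴴ * ((PauliOp Q)ᴴ * (Hᴴ *
              nuH (nuE (eAct Q + R) ((PauliOp R)ᴴ * ρ * PauliOp R)) * H) * PauliOp Q) * E
          = ∑ P : Pauli n, (p P : ℂ) • (PauliOp P * ρ * (PauliOp P)ᴴ)) := by
  have hconj : ∀ Q M, Eᴴ * ((PauliOp Q)ᴴ * M * PauliOp Q) * E
      = (PauliOp (eAct Q))ᴴ * (Eᴴ * M * E) * PauliOp (eAct Q) := fun Q M => by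
    obtain ⟨c, hc⟩ := heAct Q
    exact conj_conj_eq_of_mul_eq_smul_mul hE.1 (PauliOp_conjTranspose_mul_self Q)
      (PauliOp_conjTranspose_mul_self (eAct Q)) hc M
  set Φ : 𝕄[n] → 𝕄[n] := fun X => Eᴴ * (Hᴴ * nuH (((4 : ℂ) ^ n)⁻¹ •
    ∑ R' : Pauli n, nuE R' ((PauliOp R')ᴴ * X * PauliOp R')) * H) * E
  have hchannel : ∀ ρ, effectiveChannel eAct E (fun R X => Hᴴ * nuH (nuE R X) * H) ρ
      = pauliTwirl Φ ρ := fun ρ => by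
    rw [effectiveChannel_eq_pauliTwirl eAct E _ hconj ρ]
    simp only [Φ, map_smul, map_sum, mul_smul_comm, smul_mul_assoc, mul_sum, sum_mul]
  obtain ⟨p, hp0, hp1, hp⟩ := exists_pauliTwirl_kraus_eq K hK
  have hΦ : Φ = fun X => ∑ k, K k * X * (K k)ᴴ := funext hKraus
  exact ⟨hchannel, p, hp0, hp1, fun ρ => (hchannel ρ).trans (hΦ ▸ hp ρ)⟩

/-- if the hard cycle `H` and the easy cycle `E` are Clifford and
the twirling set is the full Pauli group, then the effective dressed-cycle error
channel `⟨φ(E⁻¹) φ(Q⁻¹) φ(H⁻¹) ν(H) ν(QER) φ(R⁻¹)⟩_{Q,R}` equals the Pauli twirl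
`[φ(E⁻¹) φ(H⁻¹) ν(H) ⟨ν(ER') φ(R'⁻¹)⟩_{R'}]^{P_n}` and is therefore a Pauli
stochastic channel `Σ_P p(P) P ρ P†`.  Here `ν(QER)` is encoded as
`nuE (eAct Q + R)`, where `eAct` is the symplectic action of conjugation by the
Clifford `E` (so that `Q·E·R = (phase)·E·(eAct Q)·R` has Pauli dressing label
`eAct Q + R`), the Kraus data `K` encodes CPTP-ness of the averaged map inside
the twirl. -/
theorem effective_error_clifford {n m : ℕ}
    (E H : Matrix (Fin n → ZMod 2) (Fin n → ZMod 2) ℂ)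
    (nuH : Matrix (Fin n → ZMod 2) (Fin n → ZMod 2) ℂ →ₗ[ℂ]
      Matrix (Fin n → ZMod 2) (Fin n → ZMod 2) ℂ)
    (nuE : Pauli n → (Matrix (Fin n → ZMod 2) (Fin n → ZMod 2) ℂ →ₗ[ℂ]
      Matrix (Fin n → ZMod 2) (Fin n → ZMod 2) ℂ))
    (hE : Eᴴ * E = 1 ∧ E * Eᴴ = 1) (hH : Hᴴ * H = 1 ∧ H * Hᴴ = 1)
    (eAct : Equiv.Perm (Pauli n))
    (heAct : ∀ Q : Pauli n, ∃ c : ℂ, PauliOp Q * E = c • (E * PauliOp (eAct Q)))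
    (K : Fin m → Matrix (Fin n → ZMod 2) (Fin n → ZMod 2) ℂ)
    (hK : ∑ k, (K k)ᴴ * K k = 1)
    (hKraus : ∀ ρ,
      Eᴴ * (Hᴴ * nuH (((4 : ℂ) ^ n)⁻¹ •
          ∑ R' : Pauli n, nuE R' ((PauliOp R')ᴴ * ρ * PauliOp R')) * H) * E
        = ∑ k, K k * ρ * (K k)ᴴ) :
    -- the effective error channel equals the Pauli twirl of the bracketed map:
    (∀ ρ : Matrix (Fin n → ZMod 2) (Fin n → ZMod 2) ℂ,
      ((16 : ℂ) ^ n)⁻¹ • ∑ Q : Pauli n, ∑ R : Pauli n,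
          Eᴴ * ((PauliOp Q)ᴴ * (Hᴴ *
            nuH (nuE (eAct Q + R) ((PauliOp R)ᴴ * ρ * PauliOp R)) * H) * PauliOp Q) * E
        = ((4 : ℂ) ^ n)⁻¹ • ∑ P : Pauli n,
            (PauliOp P)ᴴ *
              (Eᴴ * (Hᴴ * nuH (((4 : ℂ) ^ n)⁻¹ •
                  ∑ R' : Pauli n, nuE R'
                    ((PauliOp R')ᴴ * (PauliOp P * ρ * (PauliOp P)ᴴ) * PauliOp R')) * H) * E)
              * PauliOp P) ∧
    -- and is therefore a Pauli stochastic channel: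
    (∃ p : Pauli n → ℝ, (∀ P, 0 ≤ p P) ∧ (∑ P, p P = 1) ∧
      ∀ ρ : Matrix (Fin n → ZMod 2) (Fin n → ZMod 2) ℂ,
        ((16 : ℂ) ^ n)⁻¹ • ∑ Q : Pauli n, ∑ R : Pauli n,
            Eᴴ * ((PauliOp Q)ᴴ * (Hᴴ *
              nuH (nuE (eAct Q + R) ((PauliOp R)ᴴ * ρ * PauliOp R)) * H) * PauliOp Q) * E
          = ∑ P : Pauli n, (p P : ℂ) • (PauliOp P * ρ * (PauliOp P)ᴴ)) :=
  effective_error_clifford_general E H nuH nuE hE eAct heAct K hK hKraus
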